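/- arXiv:2201.01660 — 2 statements merged into one kernel-verified Lean document; each statement's English description precedes it below -/
import Mathlib

section
/- Let d ≥ 1 and s ∈ ℝ^d. Let f, ℓ : ℝ^d → ℝ be C² on a neighborhood of s and let η ∈ ℝ^d with η ≠ 0. Assume ℓ(s) = 0, ∇ℓ(s) = η, ∇f(s) = 0, and that the Hessian at s of the function φ := f − f(s) + ℓ²/2 is positive definite. Then there exists a neighborhood V of s such that for every x ∈ V with x ≠ s and ⟨x − s, η⟩ = 0, one has f(x) > f(s). -/
open Matrix

noncomputable section

open Filter Topology Metric Asymptotics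

/-- Partial derivative `∂_i u (x)`. -/
def pd {d : ℕ} (i : Fin d) (u : (Fin d → ℝ) → ℝ) (x : Fin d → ℝ) : ℝ :=
  fderiv ℝ u x (Pi.single i 1)

/-- Gradient `∇u(x)` as a vector. -/
def grad {d : ℕ} (u : (Fin d → ℝ) → ℝ) (x : Fin d → ℝ) : Fin d → ℝ :=
  fun i => pd i u x

/-- Hessian matrix of second partial derivatives. -/
def hess {d : ℕ} (f : (Fin d → ℝ) → ℝ) (x : Fin d → ℝ) : Matrix (Fin d) (Fin d) ℝ :=
  Matrix.of fun i j => pd i (pd j f) x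

lemma pi_eq_sum_single {d : ℕ} (v : Fin d → ℝ) :
    v = ∑ i, v i • (Pi.single i 1 : Fin d → ℝ) := by
  funext j
  rw [Finset.sum_apply]
  simp [Pi.single_apply]

lemma clm_apply_eq_sum {d : ℕ} (L : (Fin d → ℝ) →L[ℝ] ℝ) (v : Fin d → ℝ) :
    L v = ∑ i, v i * L (Pi.single i 1) := by
  conv_lhs => rw [pi_eq_sum_single v]
  simp [map_sum, _root_.map_smul, smul_eq_mul]

lemma bilin_eq_dot {d : ℕ} (B : (Fin d → ℝ) →L[ℝ] (Fin d → ℝ) →L[ℝ] ℝ)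
    (v : Fin d → ℝ) (M : Matrix (Fin d) (Fin d) ℝ)
    (hM : ∀ i j, M i j = B (Pi.single i 1) (Pi.single j 1)) :
    v ⬝ᵥ M.mulVec v = B v v := by
  conv_rhs => rw [pi_eq_sum_single v]
  simp only [map_sum, _root_.map_smul, ContinuousLinearMap.coe_sum', Finset.sum_apply,
    ContinuousLinearMap.coe_smul', Pi.smul_apply, smul_eq_mul]
  simp only [dotProduct, Matrix.mulVec, hM]
  simp only [Finset.mul_sum]
  rw [Finset.sum_comm]
  exact Finset.sum_congr rfl fun i _ => Finset.sum_congr rfl fun j _ => by ring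

lemma coercive {d : ℕ} (hd : 1 ≤ d) (B : (Fin d → ℝ) →L[ℝ] (Fin d → ℝ) →L[ℝ] ℝ)
    (h : ∀ v : Fin d → ℝ, v ≠ 0 → 0 < B v v) :
    ∃ c > 0, ∀ v : Fin d → ℝ, c * ‖v‖ ^ 2 ≤ B v v := by
  haveI : Nonempty (Fin d) := ⟨⟨0, hd⟩⟩
  haveI : Nontrivial (Fin d → ℝ) := inferInstance
  have hcont : Continuous fun v : Fin d → ℝ => B v v := by fun_prop
  have hsph : IsCompact (sphere (0 : Fin d → ℝ) 1) := isCompact_sphere 0 1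
  have hne : (sphere (0 : Fin d → ℝ) 1).Nonempty :=
    NormedSpace.sphere_nonempty.mpr zero_le_one
  obtain ⟨u, hu, hmin'⟩ := hsph.exists_isMinOn hne hcont.continuousOn
  have hmin : ∀ w ∈ sphere (0 : Fin d → ℝ) 1, B u u ≤ B w w := fun w hw => hmin' hw
  have hu1 : ‖u‖ = 1 := by simpa using hu
  have hu0 : u ≠ 0 := by intro h0; rw [h0] at hu1; simp at hu1
  refine ⟨B u u, h u hu0, fun v => ?_⟩
  rcases eq_or_ne v 0 with rfl | hv
  · simp
  · have hnv : (0:ℝ) < ‖v‖ := norm_pos_iff.mpr hv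
    set w : Fin d → ℝ := ‖v‖⁻¹ • v with hw
    have hw1 : ‖w‖ = 1 := by
      rw [hw, norm_smul, norm_inv, norm_norm, inv_mul_cancel₀ hnv.ne']
    have hvw : v = ‖v‖ • w := by rw [hw, smul_smul, mul_inv_cancel₀ hnv.ne', one_smul]
    have hBv : B v v = ‖v‖ ^ 2 * B w w := by
      conv_lhs => rw [hvw]
      rw [ContinuousLinearMap.map_smul₂, (B w).map_smul, smul_eq_mul, smul_eq_mul]
      ring
    rw [hBv]
    have := hmin w (by simpa using hw1)
    nlinarith [sq_nonneg ‖v‖, this, mul_le_mul_of_nonneg_left this (sq_nonneg ‖v‖)]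

lemma taylor2 {E : Type*} [NormedAddCommGroup E] [NormedSpace ℝ E]
    (g : E → ℝ) (s : E) (hg : ContDiffAt ℝ 2 g s) :
    (fun x => g x - g s - fderiv ℝ g s (x - s)
      - (1/2) * fderiv ℝ (fderiv ℝ g) s (x - s) (x - s)) =o[𝓝 s] fun x => ‖x - s‖ ^ 2 := by
  set B := fderiv ℝ (fderiv ℝ g) s with hBdef
  have hsymm : ∀ v w, B v w = B w v := hg.isSymmSndFDerivAt (by simp [minSmoothness_of_isRCLikeNormedField])
  have hBd : DifferentiableAt ℝ (fderiv ℝ g) s :=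
    (hg.fderiv_right (m := 1) (by norm_num)).differentiableAt one_ne_zero
  have hB : HasFDerivAt (fderiv ℝ g) B s := hBd.hasFDerivAt
  rw [isLittleO_iff]
  intro ε hε
  have h1 : ∀ᶠ y in 𝓝 s, ‖fderiv ℝ g y - fderiv ℝ g s - B (y - s)‖ ≤ ε * ‖y - s‖ :=
    hB.isLittleO.def hε
  have h2 : ∀ᶠ y in 𝓝 s, DifferentiableAt ℝ g y := by
    filter_upwards [hg.eventually (by simp)] with y hy
    exact hy.differentiableAt (by norm_num)
  obtain ⟨r, hr, hball⟩ := Metric.eventually_nhds_iff_ball.mp (h1.and h2)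
  filter_upwards [Metric.ball_mem_nhds s hr] with x hx
  set L := fderiv ℝ g s with hLdef
  set φ : E → ℝ := fun y => g y - L (y - s) - (1/2) * B (y - s) (y - s) with hφdef
  have hφs : φ s = g s := by simp [hφdef]
  have hder : ∀ y ∈ Metric.ball s r,
      HasFDerivAt φ (fderiv ℝ g y - L - B (y - s)) y := by
    intro y hy
    have hgy : HasFDerivAt g (fderiv ℝ g y) y := ((hball y hy).2).hasFDerivAt
    have hLy : HasFDerivAt (fun z => L (z - s)) L y := by
      exact L.hasFDerivAt.comp y ((hasFDerivAt_id y).sub_const s)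
    have hc : HasFDerivAt (fun z => B (z - s)) B y := by
      exact B.hasFDerivAt.comp y ((hasFDerivAt_id y).sub_const s)
    have hu : HasFDerivAt (fun z : E => z - s) (ContinuousLinearMap.id ℝ E) y :=
      (hasFDerivAt_id y).sub_const s
    have hq : HasFDerivAt (fun z => B (z - s) (z - s))
        ((B (y - s)).comp (ContinuousLinearMap.id ℝ E) + B.flip (y - s)) y :=
      hc.clm_apply hu
    have hq2 : HasFDerivAt (fun z => (1/2 : ℝ) * B (z - s) (z - s))
        ((1/2 : ℝ) • ((B (y - s)).comp (ContinuousLinearMap.id ℝ E) + B.flip (y - s))) y :=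
      hq.const_mul _
    have : HasFDerivAt φ (fderiv ℝ g y - L -
        (1/2 : ℝ) • ((B (y - s)).comp (ContinuousLinearMap.id ℝ E) + B.flip (y - s))) y :=
      (hgy.sub hLy).sub hq2
    convert this using 1
    ext w
    simp only [ContinuousLinearMap.sub_apply, ContinuousLinearMap.smul_apply,
      ContinuousLinearMap.add_apply, ContinuousLinearMap.comp_apply,
      ContinuousLinearMap.coe_id', id_eq, ContinuousLinearMap.flip_apply, smul_eq_mul]
    rw [hsymm w (y - s)]
    ring
  have hseg : segment ℝ s x ⊆ Metric.ball s r :=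
    (convex_ball s r).segment_subset (mem_ball_self hr) hx
  have bound : ∀ y ∈ segment ℝ s x,
      ‖fderiv ℝ g y - L - B (y - s)‖ ≤ ε * ‖x - s‖ := by
    intro y hy
    obtain ⟨a, b, ha, hb, hab, rfl⟩ := hy
    have hys : a • s + b • x - s = b • (x - s) := by
      have : a = 1 - b := by linarith
      rw [this]; module
    have h1y := (hball _ (hseg ⟨a, b, ha, hb, hab, rfl⟩)).1
    refine h1y.trans ?_
    rw [hys, norm_smul, Real.norm_of_nonneg hb]
    have : b * ‖x - s‖ ≤ 1 * ‖x - s‖ :=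
      mul_le_mul_of_nonneg_right (by linarith) (norm_nonneg _)
    nlinarith [norm_nonneg (x - s), hε.le]
  have key := (convex_segment s x).norm_image_sub_le_of_norm_hasFDerivWithin_le
    (fun y hy => (hder y (hseg hy)).hasFDerivWithinAt) bound
    (left_mem_segment ℝ s x) (right_mem_segment ℝ s x)
  have hφx : φ x - φ s = g x - g s - L (x - s) - (1/2) * B (x - s) (x - s) := by
    rw [hφs]; simp [hφdef]; ring
  calc ‖g x - g s - L (x - s) - (1/2) * B (x - s) (x - s)‖
      = ‖φ x - φ s‖ := by rw [hφx]
    _ ≤ ε * ‖x - s‖ * ‖x - s‖ := key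
    _ = ε * ‖‖x - s‖ ^ 2‖ := by
        rw [Real.norm_of_nonneg (by positivity)]; ring

theorem f_increases_on_orthogonal_of_eta
    (d : ℕ) (hd : 1 ≤ d) (s : Fin d → ℝ)
    (f ℓ : (Fin d → ℝ) → ℝ) (η : Fin d → ℝ) (hη : η ≠ 0)
    (hreg : ∃ W : Set (Fin d → ℝ), IsOpen W ∧ s ∈ W ∧
      ContDiffOn ℝ 2 f W ∧ ContDiffOn ℝ 2 ℓ W)
    (hℓs : ℓ s = 0) (hgradℓ : grad ℓ s = η) (hgradf : grad f s = 0)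
    (hpos : ∀ x : Fin d → ℝ, x ≠ 0 →
      0 < x ⬝ᵥ (hess (fun y => f y - f s + (ℓ y) ^ 2 / 2) s).mulVec x) :
    ∃ V ∈ nhds s, ∀ x ∈ V, x ≠ s → (x - s) ⬝ᵥ η = 0 → f s < f x := by
  obtain ⟨W, hWo, hsW, hf2, hl2⟩ := hreg
  have hWs : W ∈ 𝓝 s := hWo.mem_nhds hsW
  set g : (Fin d → ℝ) → ℝ := fun y => f y - f s + ℓ y ^ 2 / 2 with hgdef
  have hgat : ContDiffAt ℝ 2 g s :=
    ((hf2.sub contDiffOn_const).add ((hl2.pow 2).div_const 2)).contDiffAt hWs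
  have hfat : ContDiffAt ℝ 2 f s := hf2.contDiffAt hWs
  have hlat : ContDiffAt ℝ 2 ℓ s := hl2.contDiffAt hWs
  have hfd : DifferentiableAt ℝ f s := hfat.differentiableAt (by norm_num)
  have hld : DifferentiableAt ℝ ℓ s := hlat.differentiableAt (by norm_num)
  set L := fderiv ℝ ℓ s with hLdef
  have hLval : ∀ v, L v = v ⬝ᵥ η := by
    intro v
    rw [clm_apply_eq_sum]
    refine Finset.sum_congr rfl fun i _ => ?_
    have hi := congrFun hgradℓ i
    rw [← hi]; rfl
  have hf0 : fderiv ℝ f s = 0 := by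
    apply ContinuousLinearMap.ext
    intro v
    rw [clm_apply_eq_sum]
    have hz : ∀ i, fderiv ℝ f s (Pi.single i 1) = 0 := fun i => congrFun hgradf i
    simp [hz]
  -- derivative of g at s is 0
  have hgd : HasFDerivAt g (0 : (Fin d → ℝ) →L[ℝ] ℝ) s := by
    have heq : g = fun y => (f y - f s) + (1/2 : ℝ) * (ℓ y * ℓ y) := by
      funext y; simp [hgdef]; ring
    have h2 : HasFDerivAt (fun y => ℓ y * ℓ y) (ℓ s • L + ℓ s • L) s :=
      hld.hasFDerivAt.mul hld.hasFDerivAt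
    have h4 : HasFDerivAt (fun y => (1/2 : ℝ) * (ℓ y * ℓ y))
        ((1/2 : ℝ) • (ℓ s • L + ℓ s • L)) s := h2.const_mul ((1:ℝ)/2)
    have h5 := (hfd.hasFDerivAt.sub_const (f s)).add h4
    rw [heq]
    refine h5.congr_fderiv ?_
    rw [hf0, hℓs]
    simp
  have hg0 : fderiv ℝ g s = 0 := hgd.fderiv
  have hgs0 : g s = 0 := by simp [hgdef, hℓs]
  set B := fderiv ℝ (fderiv ℝ g) s with hBdef
  have hBd : DifferentiableAt ℝ (fderiv ℝ g) s :=
    (hgat.fderiv_right (m := 1) (by norm_num)).differentiableAt one_ne_zero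
  have hhessB : ∀ i j, hess g s i j = B (Pi.single i 1) (Pi.single j 1) := by
    intro i j
    show pd i (pd j g) s = _
    unfold pd
    rw [fderiv_clm_apply hBd (differentiableAt_const _)]
    simp
    rfl
  have hpos' : ∀ v : Fin d → ℝ, v ≠ 0 → 0 < B v v := by
    intro v hv
    have h := hpos v hv
    rwa [bilin_eq_dot B v (hess g s) hhessB] at h
  obtain ⟨c, hc, hcoer⟩ := coercive hd B hpos'
  set δ : ℝ := min 1 (c/4) with hδdef
  have hδ0 : 0 < δ := lt_min one_pos (by positivity)
  have hδ1 : δ ≤ 1 := min_le_left _ _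
  have hδ2 : δ ≤ c/4 := min_le_right _ _
  have hT := (isLittleO_iff.mp (taylor2 g s hgat)) (show (0:ℝ) < c/8 by positivity)
  have hL1 := hld.hasFDerivAt.isLittleO.def hδ0
  obtain ⟨V, hV, hVp⟩ := Filter.eventually_iff_exists_mem.mp (hT.and hL1)
  refine ⟨V, hV, fun x hx hxs hortho => ?_⟩
  obtain ⟨hx1, hx2⟩ := hVp x hx
  have hw0 : x - s ≠ 0 := sub_ne_zero.mpr hxs
  have hn : 0 < ‖x - s‖ := norm_pos_iff.mpr hw0
  have hn2 : 0 < ‖x - s‖ ^ 2 := pow_pos hn 2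
  rw [hgs0, hg0] at hx1
  simp only [ContinuousLinearMap.zero_apply, sub_zero,
    Real.norm_eq_abs] at hx1
  rw [abs_of_nonneg (by positivity : (0:ℝ) ≤ ‖x - s‖ ^ 2)] at hx1
  rw [← hBdef] at hx1
  have habs1 := abs_le.mp hx1
  rw [hℓs, hLval (x - s), hortho] at hx2
  simp only [sub_zero, Real.norm_eq_abs] at hx2
  have hsq : ℓ x ^ 2 ≤ (δ * ‖x - s‖) ^ 2 := by
    have h := pow_le_pow_left₀ (abs_nonneg (ℓ x)) hx2 2
    simpa [sq_abs] using h
  have hδsq : δ ^ 2 ≤ c/4 := by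
    have h := mul_le_mul hδ1 hδ2 hδ0.le zero_le_one
    calc δ ^ 2 = δ * δ := sq δ
      _ ≤ 1 * (c/4) := h
      _ = c/4 := one_mul _
  have h5 : ℓ x ^ 2 ≤ (c/4) * ‖x - s‖ ^ 2 := by
    calc ℓ x ^ 2 ≤ (δ * ‖x - s‖) ^ 2 := hsq
      _ = δ ^ 2 * ‖x - s‖ ^ 2 := by ring
      _ ≤ (c/4) * ‖x - s‖ ^ 2 := mul_le_mul_of_nonneg_right hδsq (sq_nonneg _)
  have hcw := hcoer (x - s)
  have hgoal : f x = g x - ℓ x ^ 2 / 2 + f s := by simp [hgdef]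
  have hfin : 0 < g x - ℓ x ^ 2 / 2 := by linarith [habs1.1, hcw, h5, mul_pos hc hn2]
  linarith [hfin, hgoal.ge, hgoal.le]

end
end

section
/- Let d ≥ 1 and h > 0. Let A : ℝ^d → M_d(ℝ) be smooth with A(x) symmetric for every x, let b : ℝ^d → ℝ^d, c : ℝ^d → ℝ and f : ℝ^d → ℝ be smooth, and assume both P_h(e^{−f/h}) = 0 and P_h†(e^{−f/h}) = 0 pointwise on ℝ^d. Then for every real-valued, compactly supported smooth function v ∈ C_c^∞(ℝ^d; ℝ), ∫_{ℝ^d} P_h( v·e^{−f/h} )(x) · v(x) e^{−f(x)/h} dx = h² ∫_{ℝ^d} ⟨A(x)∇v(x), ∇v(x)⟩ e^{−2f(x)/h} dx. -/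
open Matrix MeasureTheory
open scoped ContDiff

noncomputable section

/-- Divergence of a vector field. -/
def dvg {d : ℕ} (V : (Fin d → ℝ) → (Fin d → ℝ)) (x : Fin d → ℝ) : ℝ :=
  ∑ i, fderiv ℝ (fun y => V y i) x (Pi.single i 1)

/-- The Fokker–Planck type operator
`P_h u = −h² div(A∇u) + (h/2)(b·∇u + div(b u)) + c u`. -/
def FPop {d : ℕ} (A : (Fin d → ℝ) → Matrix (Fin d) (Fin d) ℝ)
    (b : (Fin d → ℝ) → (Fin d → ℝ)) (c : (Fin d → ℝ) → ℝ) (h : ℝ)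
    (u : (Fin d → ℝ) → ℝ) (x : Fin d → ℝ) : ℝ :=
  -h ^ 2 * dvg (fun y => (A y).mulVec (grad u y)) x
    + (h / 2) * (b x ⬝ᵥ grad u x + dvg (fun y => u y • b y) x)
    + c x * u x

/-- The formal adjoint
`P_h† u = −h² div(A∇u) − (h/2)(b·∇u + div(b u)) + c u`. -/
def FPadj {d : ℕ} (A : (Fin d → ℝ) → Matrix (Fin d) (Fin d) ℝ)
    (b : (Fin d → ℝ) → (Fin d → ℝ)) (c : (Fin d → ℝ) → ℝ) (h : ℝ)
    (u : (Fin d → ℝ) → ℝ) (x : Fin d → ℝ) : ℝ :=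
  -h ^ 2 * dvg (fun y => (A y).mulVec (grad u y)) x
    - (h / 2) * (b x ⬝ᵥ grad u x + dvg (fun y => u y • b y) x)
    + c x * u x

namespace DirichletAux
variable {d : ℕ}

variable {d : ℕ}

lemma contDiff_pd (i : Fin d) {u : (Fin d → ℝ) → ℝ} (hu : ContDiff ℝ ∞ u) :
    ContDiff ℝ ∞ (pd i u) := by
  unfold pd
  exact (hu.fderiv_right (le_refl _)).clm_apply contDiff_const

lemma dAt {u : (Fin d → ℝ) → ℝ} (hu : ContDiff ℝ ∞ u) (x : Fin d → ℝ) :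
    DifferentiableAt ℝ u x :=
  (hu.differentiable (by simp)).differentiableAt

lemma pd_add {u w : (Fin d → ℝ) → ℝ} (i : Fin d) (x : Fin d → ℝ)
    (hu : DifferentiableAt ℝ u x) (hw : DifferentiableAt ℝ w x) :
    pd i (fun y => u y + w y) x = pd i u x + pd i w x := by
  unfold pd; rw [fderiv_fun_add hu hw]; simp

lemma pd_mul {u w : (Fin d → ℝ) → ℝ} (i : Fin d) (x : Fin d → ℝ)
    (hu : DifferentiableAt ℝ u x) (hw : DifferentiableAt ℝ w x) :
    pd i (fun y => u y * w y) x = pd i u x * w x + u x * pd i w x := by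
  unfold pd; rw [fderiv_fun_mul hu hw]; simp; ring

lemma pd_const_mul {u : (Fin d → ℝ) → ℝ} (i : Fin d) (x : Fin d → ℝ) (a : ℝ)
    (hu : DifferentiableAt ℝ u x) :
    pd i (fun y => a * u y) x = a * pd i u x := by
  unfold pd; rw [fderiv_const_mul hu]; simp

lemma pd_sum {ι : Type*} (s : Finset ι) (F : ι → ((Fin d → ℝ) → ℝ)) (i : Fin d)
    (x : Fin d → ℝ) (hF : ∀ j ∈ s, DifferentiableAt ℝ (F j) x) :
    pd i (fun y => ∑ j ∈ s, F j y) x = ∑ j ∈ s, pd i (F j) x := by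
  unfold pd; rw [fderiv_fun_sum hF]; simp

lemma pd_eq_zero_of_nmem_tsupport {u : (Fin d → ℝ) → ℝ} {x : Fin d → ℝ}
    (hx : x ∉ tsupport u) (i : Fin d) : pd i u x = 0 := by
  have hev : u =ᶠ[nhds x] fun _ => 0 := by
    filter_upwards [(isClosed_tsupport u).isOpen_compl.mem_nhds hx] with y hy
    exact image_eq_zero_of_notMem_tsupport hy
  unfold pd
  rw [Filter.EventuallyEq.fderiv_eq hev, fderiv_fun_const]
  simp

lemma integral_pd_eq_zero {g : (Fin d → ℝ) → ℝ} (hg : ContDiff ℝ ∞ g)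
    (hgs : HasCompactSupport g) (i : Fin d) : ∫ x, pd i g x = 0 := by
  obtain ⟨r, hr⟩ := hgs.isBounded.subset_closedBall 0
  set R : ℝ := max r 0 + 1 with hR
  have hrR : r ≤ R := le_trans (le_max_left r 0) (by simp [hR])
  have hR0 : 0 < R := by positivity
  set χ : ContDiffBump (0 : Fin d → ℝ) := ⟨R, R + 1, hR0, by linarith⟩ with hχ
  obtain ⟨C, hC⟩ := hg.lipschitzWith_of_hasCompactSupport hgs (by simp)
  obtain ⟨D, hD⟩ := χ.contDiff.lipschitzWith_of_hasCompactSupport χ.hasCompactSupport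
    one_ne_zero
  have key := LipschitzWith.integral_lineDeriv_mul_eq (μ := volume) hC hD
    χ.hasCompactSupport (Pi.single i 1)
  have h1 : ∀ x, lineDeriv ℝ g x (Pi.single i 1) * (χ : (Fin d → ℝ) → ℝ) x = pd i g x := by
    intro x
    have hld : lineDeriv ℝ g x (Pi.single i 1) = pd i g x := (dAt hg x).lineDeriv_eq_fderiv
    by_cases hx : x ∈ tsupport g
    · rw [hld, χ.one_of_mem_closedBall (Metric.closedBall_subset_closedBall hrR (hr hx)),
        mul_one]
    · rw [hld, pd_eq_zero_of_nmem_tsupport hx, zero_mul]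
  have h2 : ∀ x, lineDeriv ℝ (χ : (Fin d → ℝ) → ℝ) x (-(Pi.single i 1)) * g x = 0 := by
    intro x
    by_cases hx : g x = 0
    · rw [hx, mul_zero]
    · have hx1 : x ∈ tsupport g := subset_tsupport g hx
      have hrltR : r < R := by
        have := le_max_left r 0
        simp only [hR]; linarith
      have hx2 : x ∈ Metric.ball (0 : Fin d → ℝ) R :=
        Metric.mem_ball.2 ((Metric.mem_closedBall.1 (hr hx1)).trans_lt hrltR)
      have hev : (χ : (Fin d → ℝ) → ℝ) =ᶠ[nhds x] fun _ => 1 := by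
        filter_upwards [Metric.isOpen_ball.mem_nhds hx2] with y hy
        exact χ.one_of_mem_closedBall (Metric.ball_subset_closedBall hy)
      rw [hev.lineDeriv_eq]
      simp [lineDeriv]
  calc ∫ x, pd i g x = ∫ x, lineDeriv ℝ g x (Pi.single i 1) * (χ : (Fin d → ℝ) → ℝ) x := by
        refine integral_congr_ae (Filter.Eventually.of_forall fun x => (h1 x).symm)
    _ = ∫ x, lineDeriv ℝ (χ : (Fin d → ℝ) → ℝ) x (-(Pi.single i 1)) * g x := key
    _ = 0 := by simp [h2]



lemma algebra_main {d : ℕ} (h vx px cx : ℝ)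
    (bv vi pi' Db : Fin d → ℝ)
    (Aij DA vij pij : Fin d → Fin d → ℝ)
    (hsymm : ∀ i j, Aij i j = Aij j i) :
    (-h ^ 2 * (∑ i, ∑ j, (DA i j * (vi j * px + vx * pi' j)
        + Aij i j * ((vij i j * px + vi j * pi' i) + (vi i * pi' j + vx * pij i j))))
      + h / 2 * ((∑ i, bv i * (vi i * px + vx * pi' i))
          + ∑ i, ((vi i * px + vx * pi' i) * bv i + (vx * px) * Db i))
      + cx * (vx * px)) * (vx * px)
    =
    vx * vx * px / 2 *
      ((-h ^ 2 * (∑ i, ∑ j, (DA i j * pi' j + Aij i j * pij i j))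
          + h / 2 * ((∑ i, bv i * pi' i) + ∑ i, (pi' i * bv i + px * Db i)) + cx * px)
        + (-h ^ 2 * (∑ i, ∑ j, (DA i j * pi' j + Aij i j * pij i j))
          - h / 2 * ((∑ i, bv i * pi' i) + ∑ i, (pi' i * bv i + px * Db i)) + cx * px))
    + h ^ 2 * ((∑ i, (∑ j, Aij i j * vi j) * vi i) * (px * px))
    + ∑ i, (vi i * ((-h ^ 2) * ((px * px) * (∑ j, Aij i j * vi j))
              + h / 2 * (vx * ((px * px) * bv i)))
        + vx * ((-h ^ 2) * ((pi' i * px + px * pi' i) * (∑ j, Aij i j * vi j)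
                  + (px * px) * (∑ j, (DA i j * vi j + Aij i j * vij i j)))
            + h / 2 * ((vi i * ((px * px) * bv i))
                + vx * ((pi' i * px + px * pi' i) * bv i + (px * px) * Db i)))) := by
  have swap : (∑ i, ∑ j, Aij i j * pi' j * vi i) = ∑ i, ∑ j, Aij i j * vi j * pi' i := by
    rw [Finset.sum_comm]
    exact Finset.sum_congr rfl fun a _ => Finset.sum_congr rfl fun b _ => by
      rw [hsymm b a]; ring
  have e1 : (∑ i, ∑ j, (DA i j * (vi j * px + vx * pi' j)
        + Aij i j * ((vij i j * px + vi j * pi' i) + (vi i * pi' j + vx * pij i j))))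
      = px * (∑ i, ∑ j, DA i j * vi j) + vx * (∑ i, ∑ j, DA i j * pi' j)
        + px * (∑ i, ∑ j, Aij i j * vij i j) + (∑ i, ∑ j, Aij i j * vi j * pi' i)
        + (∑ i, ∑ j, Aij i j * pi' j * vi i) + vx * (∑ i, ∑ j, Aij i j * pij i j) := by
    simp only [Finset.mul_sum, ← Finset.sum_add_distrib]
    exact Finset.sum_congr rfl fun i _ => Finset.sum_congr rfl fun j _ => by ring
  have e2 : (∑ i, ∑ j, (DA i j * pi' j + Aij i j * pij i j))
      = (∑ i, ∑ j, DA i j * pi' j) + (∑ i, ∑ j, Aij i j * pij i j) := by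
    simp only [← Finset.sum_add_distrib]
  have e3 : (∑ i, bv i * (vi i * px + vx * pi' i))
      = px * (∑ i, bv i * vi i) + vx * (∑ i, bv i * pi' i) := by
    simp only [Finset.mul_sum, ← Finset.sum_add_distrib]
    exact Finset.sum_congr rfl fun i _ => by ring
  have e4 : (∑ i, ((vi i * px + vx * pi' i) * bv i + (vx * px) * Db i))
      = px * (∑ i, bv i * vi i) + vx * (∑ i, bv i * pi' i) + (vx * px) * (∑ i, Db i) := by
    simp only [Finset.mul_sum, ← Finset.sum_add_distrib]
    exact Finset.sum_congr rfl fun i _ => by ring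
  have e5 : (∑ i, (pi' i * bv i + px * Db i))
      = (∑ i, bv i * pi' i) + px * (∑ i, Db i) := by
    simp only [Finset.mul_sum, ← Finset.sum_add_distrib]
    exact Finset.sum_congr rfl fun i _ => by ring
  have e6 : (∑ i, (∑ j, Aij i j * vi j) * vi i) = ∑ i, ∑ j, Aij i j * vi j * vi i :=
    Finset.sum_congr rfl fun i _ => Finset.sum_mul _ _ _
  have e8 : (∑ i, (∑ j, Aij i j * vi j) * pi' i) = ∑ i, ∑ j, Aij i j * vi j * pi' i :=
    Finset.sum_congr rfl fun i _ => Finset.sum_mul _ _ _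
  have e10 : (∑ i, ∑ j, (DA i j * vi j + Aij i j * vij i j))
      = (∑ i, ∑ j, DA i j * vi j) + (∑ i, ∑ j, Aij i j * vij i j) := by
    simp only [← Finset.sum_add_distrib]
  have e7 : (∑ i, (vi i * ((-h ^ 2) * ((px * px) * (∑ j, Aij i j * vi j))
              + h / 2 * (vx * ((px * px) * bv i)))
        + vx * ((-h ^ 2) * ((pi' i * px + px * pi' i) * (∑ j, Aij i j * vi j)
                  + (px * px) * (∑ j, (DA i j * vi j + Aij i j * vij i j)))
            + h / 2 * ((vi i * ((px * px) * bv i))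
                + vx * ((pi' i * px + px * pi' i) * bv i + (px * px) * Db i)))))
      = (-h ^ 2 * (px * px)) * (∑ i, (∑ j, Aij i j * vi j) * vi i)
        + (h * vx * (px * px)) * (∑ i, bv i * vi i)
        + (-h ^ 2 * (2 * px) * vx) * (∑ i, (∑ j, Aij i j * vi j) * pi' i)
        + (-h ^ 2 * vx * (px * px)) * (∑ i, ∑ j, (DA i j * vi j + Aij i j * vij i j))
        + (h * vx * vx * px) * (∑ i, bv i * pi' i)
        + (h / 2 * vx * vx * (px * px)) * (∑ i, Db i) := by
    calc (∑ i, (vi i * ((-h ^ 2) * ((px * px) * (∑ j, Aij i j * vi j))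
              + h / 2 * (vx * ((px * px) * bv i)))
        + vx * ((-h ^ 2) * ((pi' i * px + px * pi' i) * (∑ j, Aij i j * vi j)
                  + (px * px) * (∑ j, (DA i j * vi j + Aij i j * vij i j)))
            + h / 2 * ((vi i * ((px * px) * bv i))
                + vx * ((pi' i * px + px * pi' i) * bv i + (px * px) * Db i)))))
        = ∑ i, ((-h ^ 2 * (px * px)) * ((∑ j, Aij i j * vi j) * vi i)
            + (h * vx * (px * px)) * (bv i * vi i)
            + (-h ^ 2 * (2 * px) * vx) * ((∑ j, Aij i j * vi j) * pi' i)
            + (-h ^ 2 * vx * (px * px)) * (∑ j, (DA i j * vi j + Aij i j * vij i j))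
            + (h * vx * vx * px) * (bv i * pi' i)
            + (h / 2 * vx * vx * (px * px)) * Db i) :=
          Finset.sum_congr rfl fun i _ => by ring
      _ = _ := by simp only [Finset.sum_add_distrib, ← Finset.mul_sum]
  rw [e1, e2, e3, e4, e5, e7, e8, e10, swap]
  ring
lemma dvg_eq (V : (Fin d → ℝ) → (Fin d → ℝ)) (x : Fin d → ℝ) :
    dvg V x = ∑ i, pd i (fun y => V y i) x := rfl

/-- The auxiliary vector field whose divergence collects the exact terms. -/
def Wfld (A : (Fin d → ℝ) → Matrix (Fin d) (Fin d) ℝ)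
    (b : (Fin d → ℝ) → (Fin d → ℝ)) (h : ℝ) (φ v : (Fin d → ℝ) → ℝ)
    (i : Fin d) : (Fin d → ℝ) → ℝ :=
  fun y => v y * ((-h ^ 2) * ((φ y * φ y) * (∑ j, A y i j * pd j v y))
      + h / 2 * (v y * ((φ y * φ y) * b y i)))

lemma main_pointwise (A : (Fin d → ℝ) → Matrix (Fin d) (Fin d) ℝ)
    (b : (Fin d → ℝ) → (Fin d → ℝ)) (c : (Fin d → ℝ) → ℝ) (h : ℝ)
    (φ v : (Fin d → ℝ) → ℝ)
    (hA : ∀ i j, ContDiff ℝ ∞ fun x => A x i j)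
    (hAs : ∀ x, (A x)ᵀ = A x)
    (hb : ∀ i, ContDiff ℝ ∞ fun x => b x i)
    (hφ : ContDiff ℝ ∞ φ) (hv : ContDiff ℝ ∞ v) (x : Fin d → ℝ) :
    FPop A b c h (fun y => v y * φ y) x * (v x * φ x)
      = v x * v x * φ x / 2 * (FPop A b c h φ x + FPadj A b c h φ x)
        + h ^ 2 * (((A x).mulVec (grad v x) ⬝ᵥ grad v x) * (φ x * φ x))
        + ∑ i, pd i (Wfld A b h φ v i) x := by
  -- expansions of the divergence terms
  have dvgA : ∀ (u : (Fin d → ℝ) → ℝ), ContDiff ℝ ∞ u →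
      dvg (fun y => (A y).mulVec (grad u y)) x
        = ∑ i, ∑ j, (pd i (fun y => A y i j) x * pd j u x
            + A x i j * pd i (pd j u) x) := by
    intro u hu
    rw [dvg_eq]
    refine Finset.sum_congr rfl fun i _ => ?_
    have hcomp : (fun y => ((A y).mulVec (grad u y)) i)
        = fun y => ∑ j, A y i j * pd j u y := by
      funext y; simp [Matrix.mulVec, dotProduct, grad]
    rw [hcomp]
    rw [pd_sum Finset.univ (fun j => fun y => A y i j * pd j u y) i x
      (fun j _ => ((hA i j).mul (contDiff_pd j hu)).differentiable
        (by simp) |>.differentiableAt)]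
    exact Finset.sum_congr rfl fun j _ =>
      pd_mul i x (dAt (hA i j) x) (dAt (contDiff_pd j hu) x)
  have dvgb : ∀ (u : (Fin d → ℝ) → ℝ), ContDiff ℝ ∞ u →
      dvg (fun y => u y • b y) x
        = ∑ i, (pd i u x * b x i + u x * pd i (fun y => b y i) x) := by
    intro u hu
    rw [dvg_eq]
    refine Finset.sum_congr rfl fun i _ => ?_
    have hcomp : (fun y => (u y • b y) i) = fun y => u y * b y i := by
      funext y; simp
    rw [hcomp]
    exact pd_mul i x (dAt hu x) (dAt (hb i) x)
  have dot : ∀ (u : (Fin d → ℝ) → ℝ),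
      b x ⬝ᵥ grad u x = ∑ i, b x i * pd i u x := by
    intro u; simp [dotProduct, grad]
  have pdmulvφ : ∀ (j : Fin d) (y : Fin d → ℝ),
      pd j (fun z => v z * φ z) y = pd j v y * φ y + v y * pd j φ y :=
    fun j y => pd_mul j y (dAt hv y) (dAt hφ y)
  have pd2 : ∀ i j : Fin d, pd i (pd j (fun z => v z * φ z)) x
      = (pd i (pd j v) x * φ x + pd j v x * pd i φ x)
        + (pd i v x * pd j φ x + v x * pd i (pd j φ) x) := by
    intro i j
    have hfun : pd j (fun z => v z * φ z)
        = fun y => pd j v y * φ y + v y * pd j φ y := funext (pdmulvφ j)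
    rw [hfun, pd_add i x (dAt ((contDiff_pd j hv).mul hφ) x)
        (dAt (hv.mul (contDiff_pd j hφ)) x),
      pd_mul i x (dAt (contDiff_pd j hv) x) (dAt hφ x),
      pd_mul i x (dAt hv x) (dAt (contDiff_pd j hφ) x)]
  -- smoothness of pieces of W
  have hG : ∀ i : Fin d, ContDiff ℝ ∞ (fun y => ∑ j, A y i j * pd j v y) :=
    fun i => ContDiff.sum fun j _ => (hA i j).mul (contDiff_pd j hv)
  have hφφ : ContDiff ℝ ∞ (fun y => φ y * φ y) := hφ.mul hφ
  have hφφG : ∀ i : Fin d,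
      ContDiff ℝ ∞ (fun y => (φ y * φ y) * (∑ j, A y i j * pd j v y)) :=
    fun i => hφφ.mul (hG i)
  have hφφb : ∀ i : Fin d, ContDiff ℝ ∞ (fun y => (φ y * φ y) * b y i) :=
    fun i => hφφ.mul (hb i)
  have epdW : ∀ i : Fin d, pd i (Wfld A b h φ v i) x
      = pd i v x * ((-h ^ 2) * ((φ x * φ x) * (∑ j, A x i j * pd j v x))
            + h / 2 * (v x * ((φ x * φ x) * b x i)))
        + v x * ((-h ^ 2) * ((pd i φ x * φ x + φ x * pd i φ x)
                * (∑ j, A x i j * pd j v x)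
              + (φ x * φ x) * (∑ j, (pd i (fun y => A y i j) x * pd j v x
                  + A x i j * pd i (pd j v) x)))
            + h / 2 * (pd i v x * ((φ x * φ x) * b x i)
              + v x * ((pd i φ x * φ x + φ x * pd i φ x) * b x i
                  + (φ x * φ x) * pd i (fun y => b y i) x))) := by
    intro i
    unfold Wfld
    rw [pd_mul i x (dAt hv x)
      (dAt ((contDiff_const.mul (hφφG i)).add
        (contDiff_const.mul (hv.mul (hφφb i)))) x)]
    rw [pd_add i x (dAt (contDiff_const.mul (hφφG i)) x)
      (dAt (contDiff_const.mul (hv.mul (hφφb i))) x)]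
    rw [pd_const_mul i x _ (dAt (hφφG i) x), pd_const_mul i x _ (dAt (hv.mul (hφφb i)) x)]
    rw [pd_mul i x (dAt hφφ x) (dAt (hG i) x)]
    rw [pd_mul i x (dAt hv x) (dAt (hφφb i) x)]
    rw [pd_mul i x (dAt hφφ x) (dAt (hb i) x)]
    rw [pd_mul i x (dAt hφ x) (dAt hφ x)]
    rw [pd_sum Finset.univ (fun j => fun y => A y i j * pd j v y) i x
      (fun j _ => dAt ((hA i j).mul (contDiff_pd j hv)) x)]
    have : ∀ j : Fin d, pd i (fun y => A y i j * pd j v y) x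
        = pd i (fun y => A y i j) x * pd j v x + A x i j * pd i (pd j v) x :=
      fun j => pd_mul i x (dAt (hA i j) x) (dAt (contDiff_pd j hv) x)
    simp only [this]
  -- the symmetry of A at x
  have hsymm : ∀ i j : Fin d, A x i j = A x j i := by
    intro i j
    have h0 := congrFun (congrFun (hAs x) i) j
    simpa [Matrix.transpose_apply] using h0.symm
  have hQrw : (A x).mulVec (grad v x) ⬝ᵥ grad v x
      = ∑ i, (∑ j, A x i j * pd j v x) * pd i v x := by
    simp [Matrix.mulVec, dotProduct, grad]
  simp only [FPop, FPadj]
  rw [dvgA (fun y => v y * φ y) (hv.mul hφ), dvgA φ hφ,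
    dvgb (fun y => v y * φ y) (hv.mul hφ), dvgb φ hφ,
    dot (fun y => v y * φ y), dot φ, hQrw]
  simp only [pd2, pdmulvφ, epdW]
  exact algebra_main h (v x) (φ x) (c x) (b x) (fun j => pd j v x) (fun j => pd j φ x)
    (fun i => pd i (fun y => b y i) x) (fun i j => A x i j)
    (fun i j => pd i (fun y => A y i j) x) (fun i j => pd i (pd j v) x)
    (fun i j => pd i (pd j φ) x) hsymm


end DirichletAux

open DirichletAux in
theorem dirichlet_form_identity
    (d : ℕ) (hd : 1 ≤ d) (h : ℝ) (hh : 0 < h)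
    (A : (Fin d → ℝ) → Matrix (Fin d) (Fin d) ℝ)
    (b : (Fin d → ℝ) → (Fin d → ℝ)) (c f : (Fin d → ℝ) → ℝ)
    (hA : ∀ i j, ContDiff ℝ ∞ fun x => A x i j)
    (hAsymm : ∀ x, (A x)ᵀ = A x)
    (hb : ∀ i, ContDiff ℝ ∞ fun x => b x i)
    (hc : ContDiff ℝ ∞ c) (hf : ContDiff ℝ ∞ f)
    (hP : ∀ x, FPop A b c h (fun y => Real.exp (-f y / h)) x = 0)
    (hPadj : ∀ x, FPadj A b c h (fun y => Real.exp (-f y / h)) x = 0)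
    (v : (Fin d → ℝ) → ℝ) (hv : ContDiff ℝ ∞ v)
    (hvsupp : HasCompactSupport v) :
    ∫ x : Fin d → ℝ,
        FPop A b c h (fun y => v y * Real.exp (-f y / h)) x *
          (v x * Real.exp (-f x / h))
      = h ^ 2 * ∫ x : Fin d → ℝ,
          ((A x).mulVec (grad v x) ⬝ᵥ grad v x) * Real.exp (-2 * f x / h) := by
  have hφ : ContDiff ℝ ∞ (fun y => Real.exp (-f y / h)) :=
    (hf.neg.div_const h).exp
  -- pointwise identity
  have key : ∀ x, FPop A b c h (fun y => v y * Real.exp (-f y / h)) x *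
        (v x * Real.exp (-f x / h))
      = h ^ 2 * (((A x).mulVec (grad v x) ⬝ᵥ grad v x) * Real.exp (-2 * f x / h))
        + ∑ i, pd i (Wfld A b h (fun y => Real.exp (-f y / h)) v i) x := by
    intro x
    have H := main_pointwise A b c h (fun y => Real.exp (-f y / h)) v hA hAsymm hb hφ hv x
    have hzero : FPop A b c h (fun y => Real.exp (-f y / h)) x
        + FPadj A b c h (fun y => Real.exp (-f y / h)) x = 0 := by
      rw [hP x, hPadj x]; ring
    rw [hzero, mul_zero, zero_add] at H
    have hexp : Real.exp (-f x / h) * Real.exp (-f x / h) = Real.exp (-2 * f x / h) := by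
      rw [← Real.exp_add]; congr 1; ring
    rw [hexp] at H
    exact H
  -- smoothness and support of the auxiliary field
  have hG : ∀ i : Fin d, ContDiff ℝ ∞ (fun y => ∑ j, A y i j * pd j v y) :=
    fun i => ContDiff.sum fun j _ => (hA i j).mul (contDiff_pd j hv)
  have hφφ : ContDiff ℝ ∞
      (fun y => Real.exp (-f y / h) * Real.exp (-f y / h)) := hφ.mul hφ
  have hWsm : ∀ i : Fin d,
      ContDiff ℝ ∞ (Wfld A b h (fun y => Real.exp (-f y / h)) v i) := by
    intro i
    unfold Wfld
    exact hv.mul ((contDiff_const.mul (hφφ.mul (hG i))).add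
      (contDiff_const.mul (hv.mul (hφφ.mul (hb i)))))
  have hWsupp : ∀ i : Fin d,
      HasCompactSupport (Wfld A b h (fun y => Real.exp (-f y / h)) v i) := by
    intro i
    refine HasCompactSupport.intro hvsupp fun x hx => ?_
    simp [Wfld, image_eq_zero_of_notMem_tsupport hx]
  have hpdWsupp : ∀ i : Fin d,
      HasCompactSupport (pd i (Wfld A b h (fun y => Real.exp (-f y / h)) v i)) :=
    fun i => HasCompactSupport.intro (hWsupp i)
      (fun x hx => pd_eq_zero_of_nmem_tsupport hx i)
  have intWi : ∀ i : Fin d,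
      Integrable (pd i (Wfld A b h (fun y => Real.exp (-f y / h)) v i)) volume :=
    fun i => ((contDiff_pd i (hWsm i)).continuous).integrable_of_hasCompactSupport
      (hpdWsupp i)
  -- the Dirichlet energy integrand
  have hQeq : (fun x => ((A x).mulVec (grad v x) ⬝ᵥ grad v x) * Real.exp (-2 * f x / h))
      = fun x => (∑ i, (∑ j, A x i j * pd j v x) * pd i v x) * Real.exp (-2 * f x / h) := by
    funext x
    simp [Matrix.mulVec, dotProduct, grad]
  have hQcont : Continuous
      (fun x => ((A x).mulVec (grad v x) ⬝ᵥ grad v x) * Real.exp (-2 * f x / h)) := by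
    rw [hQeq]
    exact (((ContDiff.sum fun i _ => (ContDiff.sum fun j _ =>
      (hA i j).mul (contDiff_pd j hv)).mul (contDiff_pd i hv))).mul
      ((((contDiff_const (c := (-2:ℝ))).mul hf).div_const h).exp)).continuous
  have hQsupp : HasCompactSupport
      (fun x => ((A x).mulVec (grad v x) ⬝ᵥ grad v x) * Real.exp (-2 * f x / h)) := by
    refine HasCompactSupport.intro hvsupp fun x hx => ?_
    have hz : ∀ i, pd i v x = 0 := fun i => pd_eq_zero_of_nmem_tsupport hx i
    simp [Matrix.mulVec, dotProduct, grad, hz]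
  have hQint : Integrable
      (fun x => ((A x).mulVec (grad v x) ⬝ᵥ grad v x) * Real.exp (-2 * f x / h)) volume :=
    hQcont.integrable_of_hasCompactSupport hQsupp
  simp only [key]
  rw [integral_add (hQint.const_mul (h ^ 2))
      (integrable_finset_sum _ fun i _ => intWi i),
    integral_finset_sum _ (fun i _ => intWi i), integral_const_mul,
    Finset.sum_eq_zero fun i _ => integral_pd_eq_zero (hWsm i) (hWsupp i) i, add_zero]

end
end
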